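/- arXiv:0911.2672 — 3 statements merged into one kernel-verified Lean document; each statement's English description precedes it below -/
import Mathlib

section
/- Let H be a group with pairwise distinct normal subgroups K₁, …, K_k such that each quotient H/Kᵢ is isomorphic to a non-abelian simple group Gᵢ. Then the quotient of H by the intersection K = K₁ ∩ ⋯ ∩ K_k is isomorphic to the direct product G₁ × ⋯ × G_k. -/
/-!
Each `K i` is a maximal normal subgroup, so distinct ones are comaximal. Since `H ⧸ K i` is
non-abelian, comaximality with `K i` survives finite intersections: if `M ⊔ K = N ⊔ K = ⊤` but
`M ⊓ N ≤ K`, then `⁅M, N⁆ ≤ M ⊓ N ≤ K` while `M` and `N` both map onto `H ⧸ K`, so `H ⧸ K` would be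
abelian. Hence `⨅ j ≠ i, K j` maps onto `H ⧸ K i` for every `i`, which makes
`H → ∀ i, H ⧸ K i` surjective (the Chinese remainder theorem); its kernel is `⨅ i, K i`.
-/

namespace Subgroup

variable {G : Type*} [Group G]

theorem map_mk'_eq_top_iff {K : Subgroup G} [K.Normal] {N : Subgroup G} :
    N.map (QuotientGroup.mk' K) = ⊤ ↔ N ⊔ K = ⊤ := by
  rw [← (QuotientGroup.mk' K).range_eq_top_of_surjective (QuotientGroup.mk'_surjective K),
    map_eq_range_iff, QuotientGroup.ker_mk', codisjoint_iff]

theorem le_or_sup_eq_top_of_isSimpleGroup_quotient {K : Subgroup G} [K.Normal]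
    [IsSimpleGroup (G ⧸ K)] {N : Subgroup G} (hN : N.Normal) : N ≤ K ∨ N ⊔ K = ⊤ := by
  have := (hN.map _ (QuotientGroup.mk'_surjective K)).eq_bot_or_eq_top
  rwa [map_eq_bot_iff, QuotientGroup.ker_mk', map_mk'_eq_top_iff] at this

theorem ne_top_of_isSimpleGroup_quotient {K : Subgroup G} [K.Normal]
    [IsSimpleGroup (G ⧸ K)] : K ≠ ⊤ :=
  QuotientGroup.nontrivial_iff.mp inferInstance

theorem sup_eq_top_of_isSimpleGroup_quotient {K L : Subgroup G} [hK : K.Normal] [hL : L.Normal]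
    [IsSimpleGroup (G ⧸ K)] [IsSimpleGroup (G ⧸ L)] (hKL : K ≠ L) : K ⊔ L = ⊤ := by
  refine (le_or_sup_eq_top_of_isSimpleGroup_quotient (K := L) hK).resolve_left fun hKL' => ?_
  rcases le_or_sup_eq_top_of_isSimpleGroup_quotient (K := K) hL with hLK | hLK
  · exact hKL (le_antisymm hKL' hLK)
  · exact ne_top_of_isSimpleGroup_quotient (K := L) (by rwa [sup_eq_left.mpr hKL'] at hLK)

theorem commutator_le_of_sup_eq_top {K M N : Subgroup G} [K.Normal]
    (hM : M ⊔ K = ⊤) (hN : N ⊔ K = ⊤) (hMN : ⁅M, N⁆ ≤ K) : _root_.commutator G ≤ K := by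
  rw [← QuotientGroup.ker_mk' K, ← map_eq_bot_iff] at hMN ⊢
  rw [map_commutator, map_mk'_eq_top_iff.mpr hM, map_mk'_eq_top_iff.mpr hN] at hMN
  rwa [_root_.commutator_def, map_commutator, map_mk'_eq_top_iff.mpr (top_sup_eq K)]

theorem inf_sup_eq_top_of_isSimpleGroup_quotient {K M N : Subgroup G} [K.Normal]
    [IsSimpleGroup (G ⧸ K)] (hK : ¬ _root_.commutator G ≤ K) [M.Normal] [N.Normal]
    (hM : M ⊔ K = ⊤) (hN : N ⊔ K = ⊤) : M ⊓ N ⊔ K = ⊤ :=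
  (le_or_sup_eq_top_of_isSimpleGroup_quotient inferInstance).resolve_left fun hMN =>
    hK (commutator_le_of_sup_eq_top hM hN ((commutator_le_inf M N).trans hMN))

theorem finset_inf_sup_eq_top_of_isSimpleGroup_quotient {K : Subgroup G} [K.Normal]
    [IsSimpleGroup (G ⧸ K)] (hK : ¬ _root_.commutator G ≤ K) {ι : Type*} (N : ι → Subgroup G)
    [∀ i, (N i).Normal] (s : Finset ι) (hs : ∀ i ∈ s, N i ⊔ K = ⊤) : s.inf N ⊔ K = ⊤ := by
  refine (Finset.inf_induction (p := fun M : Subgroup G => M.Normal ∧ M ⊔ K = ⊤)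
    ⟨inferInstance, top_sup_eq K⟩ (fun M₁ h₁ M₂ h₂ => ?_) fun i hi => ⟨inferInstance, hs i hi⟩).2
  have := h₁.1
  have := h₂.1
  exact ⟨inferInstance, inf_sup_eq_top_of_isSimpleGroup_quotient hK h₁.2 h₂.2⟩

variable {ι : Type*} (K : ι → Subgroup G) [∀ i, (K i).Normal]

theorem ker_pi_mk' : (MonoidHom.pi fun i => QuotientGroup.mk' (K i)).ker = ⨅ i, K i := by
  ext g
  simp [funext_iff]

theorem pi_mk'_surjective [Fintype ι] [DecidableEq ι]
    (h : ∀ i, (Finset.univ.erase i).inf K ⊔ K i = ⊤) :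
    Function.Surjective (MonoidHom.pi fun i => QuotientGroup.mk' (K i)) := by
  intro x
  refine MonoidHom.mem_range.mp (pi_mem_of_mulSingle_mem x fun i => ?_)
  obtain ⟨a, ha, hax⟩ : x i ∈ ((Finset.univ.erase i).inf K).map (QuotientGroup.mk' (K i)) := by
    rw [map_mk'_eq_top_iff.mpr (h i)]
    exact mem_top _
  refine ⟨a, funext fun j => ?_⟩
  rcases eq_or_ne j i with rfl | hji
  · simpa using hax
  · simpa [Pi.mulSingle_eq_of_ne hji] using
      Finset.inf_le (f := K) (Finset.mem_erase.mpr ⟨hji, Finset.mem_univ j⟩) ha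

noncomputable def quotientiInfEquivPiQuotient [Fintype ι] [DecidableEq ι] [(⨅ i, K i).Normal]
    (h : ∀ i, (Finset.univ.erase i).inf K ⊔ K i = ⊤) : G ⧸ (⨅ i, K i) ≃* ∀ i, G ⧸ K i :=
  (QuotientGroup.quotientMulEquivOfEq (ker_pi_mk' K).symm).trans
    (QuotientGroup.quotientKerEquivOfSurjective _ (pi_mk'_surjective K h))

end Subgroup

/-- Lemma 5.1: if `H` has pairwise distinct normal subgroups `K i` each with quotient
isomorphic to a non-abelian simple group `G i`, then `H / ⋂ K i ≅ ∏ G i`. -/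
theorem stmt_0 {H : Type*} [Group H] {k : ℕ} (K : Fin k → Subgroup H)
    (hnorm : ∀ i, (K i).Normal) (hdist : Function.Injective K)
    (G : Fin k → Type*) [∀ i, Group (G i)]
    (hsimple : ∀ i, IsSimpleGroup (G i))
    (hnonab : ∀ i, ¬ ∀ x y : G i, x * y = y * x)
    (hquot : ∀ i, Nonempty ((H ⧸ K i) ≃* G i))
    [hN : (⨅ i, K i).Normal] :
    Nonempty ((H ⧸ ⨅ i, K i) ≃* (∀ i, G i)) := by
  have e i := (hquot i).some
  have (i : Fin k) : IsSimpleGroup (H ⧸ K i) := (e i).isSimpleGroup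
  have hK (i : Fin k) : ¬ commutator H ≤ K i := fun hle => by
    have := Subgroup.Normal.quotient_commutative_iff_commutator_le.mpr hle
    exact hnonab i fun x y => (e i).symm.injective (by simp only [map_mul, mul_comm'])
  have hcomax i : (Finset.univ.erase i).inf K ⊔ K i = ⊤ :=
    Subgroup.finset_inf_sup_eq_top_of_isSimpleGroup_quotient (hK i) K _ fun j hj =>
      Subgroup.sup_eq_top_of_isSimpleGroup_quotient (hdist.ne (Finset.ne_of_mem_erase hj))
  exact ⟨(Subgroup.quotientiInfEquivPiQuotient K hcomax).trans (MulEquiv.piCongrRight e)⟩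
end

section
/- Let K be the field with 2^e elements where 3 divides e, and let F be its subfield of order 2^(e/3), with r = 2^(e/3). Then there exists an element x ∈ K that generates K as a field (i.e., the subfield generated by x is all of K) and satisfies x + x^r + x^(r²) = 0. -/
open Polynomial in
lemma aux_root_count (K : Type*) [Field K] [Fintype K] [DecidableEq K] (n : ℕ) (hn : 2 ≤ n) :
    (Finset.univ.filter fun x : K => x ^ n = x).card ≤ n := by
  set p : K[X] := X ^ n - X with hp
  have hdeg : p.natDegree = n := by
    rw [hp]
    compute_degree!
    · simp [show ¬(1 = n) by omega]
    · omega
  have hp0 : p ≠ 0 := by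
    intro h
    rw [h] at hdeg
    simp at hdeg
    omega
  have hsub : (Finset.univ.filter fun x : K => x ^ n = x) ⊆ p.roots.toFinset := by
    intro x hx
    simp only [Finset.mem_filter] at hx
    rw [Multiset.mem_toFinset, mem_roots hp0]
    simp [hp, IsRoot, sub_eq_zero, hx.2]
  calc (Finset.univ.filter fun x : K => x ^ n = x).card ≤ p.roots.toFinset.card :=
        Finset.card_le_card hsub
    _ ≤ Multiset.card p.roots := p.roots.toFinset_card_le
    _ ≤ p.natDegree := p.card_roots'
    _ = n := hdeg

lemma aux_nongen (K : Type*) [Field K] [Finite K] (e : ℕ) (he0 : e ≠ 0)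
    (hcard : Nat.card K = 2 ^ e) (x : K) (hx : Subfield.closure {x} ≠ ⊤) :
    ∃ d ∈ e.properDivisors, x ^ 2 ^ d = x := by
  set L : Subfield K := Subfield.closure {x} with hL
  have : Finite ↥L := Subtype.finite
  have : Fintype K := Fintype.ofFinite K
  have : Fintype ↥L := Fintype.ofFinite _
  set m := Module.finrank ↥L K with hm
  have hKL : Nat.card K = Nat.card ↥L ^ m := by
    rw [Nat.card_eq_fintype_card, Nat.card_eq_fintype_card]
    exact Module.card_eq_pow_finrank
  have hm0 : m ≠ 0 := by
    intro h
    rw [h, pow_zero, hcard] at hKL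
    have : 0 < e := Nat.pos_of_ne_zero he0
    have : 2 ≤ 2 ^ e := Nat.one_lt_two_pow he0
    omega
  have hdvd : Nat.card ↥L ∣ 2 ^ e := by
    rw [← hcard, hKL]
    exact dvd_pow_self _ hm0
  obtain ⟨d, hde, hLd⟩ := (Nat.dvd_prime_pow Nat.prime_two).1 hdvd
  have hdm : d * m = e := by
    have h2 : (2:ℕ) ^ (d * m) = 2 ^ e := by
      rw [pow_mul, ← hLd, ← hKL, hcard]
    exact Nat.pow_right_injective le_rfl h2
  have hlt : Nat.card ↥L < Nat.card K := by
    have hss : (L : Set K) ⊂ Set.univ := by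
      rw [Set.ssubset_univ_iff]
      intro h
      exact hx (SetLike.coe_injective (by rw [h, Subfield.coe_top]))
    have := Set.ncard_lt_ncard hss (Set.finite_univ)
    rwa [← Nat.card_coe_set_eq, Set.ncard_univ] at this
  have hdlt : d < e := by
    rw [hcard, hLd] at hlt
    exact (Nat.pow_lt_pow_iff_right (le_refl 2)).1 hlt
  refine ⟨d, Nat.mem_properDivisors.2 ⟨⟨m, hdm.symm⟩, hdlt⟩, ?_⟩
  have hxL : x ∈ L := Subfield.subset_closure (Set.mem_singleton x)
  have hpow := FiniteField.pow_card (⟨x, hxL⟩ : ↥L)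
  have hcL : Fintype.card ↥L = 2 ^ d := by rw [← Nat.card_eq_fintype_card, hLd]
  rw [hcL] at hpow
  exact congrArg (Subtype.val) hpow

lemma aux_geom (n : ℕ) : ∑ d ∈ Finset.Icc 1 n, 2 ^ d = 2 ^ (n + 1) - 2 := by
  induction n with
  | zero => simp
  | succ n ih =>
    rw [Finset.sum_Icc_succ_top (by omega), ih]
    have h1 : (2:ℕ) ^ (n + 1 + 1) = 2 * 2 ^ (n + 1) := by ring
    have h2 : 2 ≤ 2 ^ (n + 1) := Nat.one_lt_two_pow (by omega)
    omega

/-- Lemma 3.1: every finite field of order `2^e` with `3 ∣ e` contains a "useful generator":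
an element generating the field with `x + x^r + x^(r²) = 0`, where `r = 2^(e/3)`. -/
theorem stmt_1 (K : Type*) [Field K] (e : ℕ) (he : 3 ∣ e) (hcard : Nat.card K = 2 ^ e) :
    ∃ x : K, Subfield.closure {x} = ⊤ ∧
      x + x ^ (2 ^ (e / 3)) + x ^ ((2 ^ (e / 3)) ^ 2) = 0 := by
  classical
  have hfin : Finite K := Nat.finite_of_card_ne_zero (by rw [hcard]; positivity)
  have : Fintype K := Fintype.ofFinite K
  have hcardF : Fintype.card K = 2 ^ e := by rw [← Nat.card_eq_fintype_card, hcard]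
  have he0 : e ≠ 0 := by
    rintro rfl
    rw [pow_zero] at hcard
    obtain ⟨hsub, -⟩ := Nat.card_eq_one_iff_unique.1 hcard
    exact one_ne_zero (Subsingleton.elim (1 : K) 0)
  set k := e / 3 with hk
  have hke : 3 * k = e := Nat.mul_div_cancel' he
  have hk1 : 1 ≤ k := by omega
  -- characteristic 2
  haveI : CharP K (ringChar K) := ringChar.charP K
  obtain ⟨n, hpprime, hcn⟩ := FiniteField.card K (ringChar K)
  have hp2 : ringChar K = 2 := by
    have hd : ringChar K ∣ 2 ^ e := by
      rw [← hcardF, hcn]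
      exact dvd_pow_self _ (by exact_mod_cast n.ne_zero)
    have := hpprime.dvd_of_dvd_pow hd
    exact (Nat.prime_dvd_prime_iff_eq hpprime Nat.prime_two).1 this
  haveI hchar : CharP K 2 := hp2 ▸ ringChar.charP K
  haveI : Fact (Nat.Prime 2) := ⟨Nat.prime_two⟩
  have hKpow : ∀ a : K, a ^ 2 ^ e = a := fun a => by
    have := FiniteField.pow_card a
    rwa [hcardF] at this
  have hsq : ((2:ℕ) ^ k) ^ 2 = 2 ^ (k * 2) := (pow_mul 2 k 2).symm
  -- the trace map as an additive homomorphism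
  set T : K →+ K := AddMonoidHom.mk'
      (fun a => a + a ^ 2 ^ k + a ^ ((2:ℕ) ^ k) ^ 2) (by
    intro a b
    simp only [hsq, add_pow_char_pow]
    ring) with hT
  have hTapp : ∀ a : K, T a = a + a ^ 2 ^ k + a ^ ((2:ℕ) ^ k) ^ 2 := fun a => rfl
  -- the range of T consists of solutions of y ^ 2^k = y
  have hrange : ∀ a : K, (T a) ^ 2 ^ k = T a := by
    intro a
    have h3 : (a ^ 2 ^ (k * 2)) ^ 2 ^ k = a := by
      rw [← pow_mul, ← pow_add, show k * 2 + k = e by omega]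
      exact hKpow a
    rw [hTapp, hsq, add_pow_char_pow, add_pow_char_pow, ← pow_mul, ← pow_add,
      show k + k = k * 2 by ring, h3]
    ring
  -- cardinality of the range
  set Rset : Finset K := Finset.univ.filter (fun y : K => y ^ 2 ^ k = y) with hR
  have hRcard : Rset.card ≤ 2 ^ k :=
    aux_root_count K (2 ^ k) (by
      calc 2 = 2 ^ 1 := (pow_one 2).symm
        _ ≤ 2 ^ k := Nat.pow_le_pow_right (by norm_num) hk1)
  have hrangecard : Nat.card ↥T.range ≤ 2 ^ k := by
    have hsub : (T.range : Set K) ⊆ ↑Rset := by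
      rintro y ⟨a, rfl⟩
      simp only [hR, Finset.coe_filter, Set.mem_setOf_eq, Finset.mem_univ, true_and]
      exact hrange a
    calc Nat.card ↥T.range = (T.range : Set K).ncard := Nat.card_coe_set_eq _
      _ ≤ (↑Rset : Set K).ncard := Set.ncard_le_ncard hsub (Set.toFinite _)
      _ = Rset.card := Set.ncard_coe_finset _
      _ ≤ 2 ^ k := hRcard
  -- cardinality of the kernel
  have hcardker : Nat.card K = Nat.card ↥T.range * Nat.card ↥T.ker := by
    rw [AddSubgroup.card_eq_card_quotient_mul_card_addSubgroup T.ker]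
    congr 1
    exact Nat.card_congr (QuotientAddGroup.quotientKerEquivRange T).toEquiv
  have hkerlb : 2 ^ (k * 2) ≤ Nat.card ↥T.ker := by
    by_contra h
    push_neg at h
    have : Nat.card K < 2 ^ k * 2 ^ (k * 2) := by
      rw [hcardker]
      calc Nat.card ↥T.range * Nat.card ↥T.ker ≤ 2 ^ k * Nat.card ↥T.ker :=
            Nat.mul_le_mul_right _ hrangecard
        _ < 2 ^ k * 2 ^ (k * 2) := by
            exact Nat.mul_lt_mul_of_le_of_lt (le_refl (2^k)) h (by positivity)
    rw [hcard, ← pow_add, show k + k * 2 = e by omega] at this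
    omega
  -- the set of non-generators
  set S : Finset K := e.properDivisors.biUnion
      (fun d => Finset.univ.filter fun x : K => x ^ 2 ^ d = x) with hS
  have hScard : S.card < 2 ^ (k * 2) := by
    have h1 : S.card ≤ ∑ d ∈ e.properDivisors, 2 ^ d := by
      refine le_trans (Finset.card_biUnion_le) ?_
      refine Finset.sum_le_sum fun d hd => ?_
      refine aux_root_count K (2 ^ d) ?_
      have hd1 : 1 ≤ d := by
        rcases Nat.mem_properDivisors.1 hd with ⟨hdvd, hlt⟩
        rcases Nat.eq_zero_or_pos d with rfl | h
        · exact absurd (Nat.eq_zero_of_zero_dvd hdvd) he0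
        · exact h
      calc 2 = 2 ^ 1 := (pow_one 2).symm
        _ ≤ 2 ^ d := Nat.pow_le_pow_right (by norm_num) hd1
    have h2 : ∑ d ∈ e.properDivisors, 2 ^ d ≤ ∑ d ∈ Finset.Icc 1 (e / 2), 2 ^ d := by
      refine Finset.sum_le_sum_of_subset ?_
      intro d hd
      rcases Nat.mem_properDivisors.1 hd with ⟨hdvd, hlt⟩
      obtain ⟨m, hm⟩ := hdvd
      have hd0 : 0 < d := by
        rcases Nat.eq_zero_or_pos d with rfl | h
        · exact absurd (Nat.eq_zero_of_zero_dvd ⟨m, hm⟩) he0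
        · exact h
      have hm2 : 2 ≤ m := by
        rcases Nat.lt_or_ge m 2 with h | h
        · interval_cases m <;> omega
        · exact h
      have : d * 2 ≤ e := by
        calc d * 2 ≤ d * m := Nat.mul_le_mul_left d hm2
          _ = e := hm.symm
      exact Finset.mem_Icc.2 ⟨hd0, by omega⟩
    have h3 : ∑ d ∈ Finset.Icc 1 (e / 2), 2 ^ d = 2 ^ (e / 2 + 1) - 2 := aux_geom _
    have h4 : (2:ℕ) ^ (e / 2 + 1) ≤ 2 ^ (k * 2) := by
      refine Nat.pow_le_pow_right (by norm_num) ?_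
      omega
    have h5 : (2:ℕ) ≤ 2 ^ (e / 2 + 1) := Nat.one_lt_two_pow (by omega)
    omega
  -- pigeonhole
  set KerFin : Finset K := Finset.univ.filter (fun a : K => T a = 0) with hKF
  have hKer : KerFin.card = Nat.card ↥T.ker := by
    have : (T.ker : Set K) = ↑KerFin := by
      ext a
      simp [hKF, AddMonoidHom.mem_ker]
    have h1 : Nat.card ↥T.ker = ((T.ker : Set K)).ncard := Nat.card_coe_set_eq _
    rw [h1, this, Set.ncard_coe_finset]
  have hlt : S.card < KerFin.card := by omega
  have hns : ¬ KerFin ⊆ S := fun h => absurd (Finset.card_le_card h) (by omega)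
  obtain ⟨x, hxK, hxS⟩ := Finset.not_subset.1 hns
  refine ⟨x, ?_, ?_⟩
  · by_contra hne
    obtain ⟨d, hd, hxd⟩ := aux_nongen K e he0 hcard x hne
    exact hxS (Finset.mem_biUnion.2 ⟨d, hd, Finset.mem_filter.2 ⟨Finset.mem_univ x, hxd⟩⟩)
  · have := (Finset.mem_filter.1 hxK).2
    rwa [hTapp] at this
end

section
/- In the group PSL₂(F_p) for a prime p ≡ 1 mod 4 with p > 5, fix i ∈ F_p with i² = −1, and let r₀ = ±[[0,i],[i,0]], r₁ = ±[[i,i],[0,−i]], r₂ = ±[[i,0],[0,−i]] (images in PSL₂ of these SL₂ matrices). Then r₀, r₁, r₂ each have order 2, r₀ and r₂ commute, r₀r₁ has order 3, and r₁r₂ has order p. -/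
/-!
By Cayley–Hamilton, every `A ∈ SL₂(R)` satisfies `A² = (tr A)·A − 1`, so the orders in question
are read off the traces: trace `0` gives `A² = −1`, trace `−1` gives `A² + A + 1 = 0` and hence
`A³ = 1`, and trace `−2` gives `(A + 1)² = 0`, hence `A^p = −1` in characteristic `p` because
`(A + 1)^p = A^p + 1`. As `−1` is central, these powers die in `PSL₂`, while no element involved is
scalar, so the orders there are exactly the primes `2`, `3`, `p`. Finally `r₀` and `r₂`
anticommute in `SL₂`, so they commute in `PSL₂`.
-/

open Matrix
open scoped MatrixGroups

lemma Matrix.sq_fin_two_eq_trace_smul_sub_det_smul {R : Type*} [CommRing R]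
    (A : Matrix (Fin 2) (Fin 2) R) : A ^ 2 = A.trace • A - A.det • 1 := by
  ext i j
  fin_cases i <;> fin_cases j <;>
    simp [sq, mul_apply, Fin.sum_univ_two, trace_fin_two, det_fin_two, one_fin_two] <;> ring

lemma pow_three_eq_one_of_sq_add_add_one_eq_zero {R : Type*} [Ring R] {x : R}
    (hx : x ^ 2 + x + 1 = 0) : x ^ 3 = 1 := by
  have : x ^ 3 = (x - 1) * (x ^ 2 + x + 1) + 1 := by noncomm_ring
  rw [this, hx, mul_zero, zero_add]

lemma pow_char_eq_neg_one_of_add_one_sq_eq_zero {R : Type*} [Ring R] (p : ℕ) [Fact p.Prime]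
    [CharP R p] {x : R} (hx : (x + 1) ^ 2 = 0) : x ^ p = -1 := by
  have h : (x + 1) ^ p = 0 := pow_eq_zero_of_le (Fact.out : p.Prime).two_le hx
  rw [add_pow_char_of_commute p (Commute.one_right x), one_pow] at h
  exact eq_neg_of_add_eq_zero_left h

namespace QuotientGroup

variable {G : Type*} [Group G] {N : Subgroup G} [N.Normal]

lemma orderOf_mk'_eq_prime {q : ℕ} [Fact q.Prime] {g : G} (hpow : g ^ q ∈ N) (hg : g ∉ N) :
    orderOf (mk' N g) = q :=
  orderOf_eq_prime (by rwa [← map_pow, mk'_apply, eq_one_iff])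
    (by rwa [Ne, mk'_apply, eq_one_iff])

lemma mk'_mul_comm_of_mul_eq {a b z : G} (hz : z ∈ N) (h : a * b = z * (b * a)) :
    mk' N a * mk' N b = mk' N b * mk' N a := by
  rw [← map_mul, ← map_mul, h, map_mul, mk'_apply N z, (eq_one_iff z).mpr hz, one_mul]

end QuotientGroup

namespace Matrix.SpecialLinearGroup

section center

variable {n R : Type*} [Fintype n] [DecidableEq n] [CommRing R] {A : SpecialLinearGroup n R}

lemma notMem_center_of_apply_ne_zero {i j : n} (hij : i ≠ j) (hA : A i j ≠ 0) :
    A ∉ Subgroup.center _ := fun hc ↦ hA <| by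
  rw [← scalar_eq_self_of_mem_center hc i]
  simp [hij]

lemma notMem_center_of_apply_self_ne {i j : n} (hA : A i i ≠ A j j) :
    A ∉ Subgroup.center _ := fun hc ↦ hA <| by
  rw [← scalar_eq_self_of_mem_center hc i]
  simp

lemma neg_one_mem_center [Fact (Even (Fintype.card n))] :
    (-1 : SpecialLinearGroup n R) ∈ Subgroup.center _ :=
  Subgroup.mem_center_iff.mpr fun B ↦ by rw [mul_neg_one, neg_one_mul]

end center

variable {R : Type*} [CommRing R] {A : SL(2, R)}

lemma coe_sq_eq_trace_smul_sub_one (A : SL(2, R)) :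
    ((A ^ 2 : SL(2, R)) : Matrix (Fin 2) (Fin 2) R) =
      trace (A : Matrix (Fin 2) (Fin 2) R) • A - 1 := by
  rw [coe_pow, sq_fin_two_eq_trace_smul_sub_det_smul, det_coe, one_smul]

lemma sq_eq_neg_one_of_trace_eq_zero (h : trace (A : Matrix (Fin 2) (Fin 2) R) = 0) :
    A ^ 2 = -1 := by
  refine Subtype.ext ?_
  rw [coe_sq_eq_trace_smul_sub_one, h, zero_smul, zero_sub, coe_neg, coe_one]

lemma pow_three_eq_one_of_trace_eq_neg_one (h : trace (A : Matrix (Fin 2) (Fin 2) R) = -1) :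
    A ^ 3 = 1 := by
  refine Subtype.ext ?_
  rw [coe_pow, coe_one]
  refine pow_three_eq_one_of_sq_add_add_one_eq_zero ?_
  rw [← coe_pow, coe_sq_eq_trace_smul_sub_one, h, neg_one_smul]
  abel

lemma pow_char_eq_neg_one_of_trace_eq_neg_two (p : ℕ) [Fact p.Prime] [CharP R p]
    (h : trace (A : Matrix (Fin 2) (Fin 2) R) = -2) : A ^ p = -1 := by
  have hsq : ((A : Matrix (Fin 2) (Fin 2) R) + 1) ^ 2 = 0 := by
    have hA := coe_sq_eq_trace_smul_sub_one A
    rw [coe_pow, h] at hA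
    calc _ = (A : Matrix (Fin 2) (Fin 2) R) ^ 2 + (2 : R) • (A : Matrix (Fin 2) (Fin 2) R) + 1 :=
          by rw [two_smul]; noncomm_ring
      _ = 0 := by rw [hA]; module
  refine Subtype.ext ?_
  rw [coe_pow, coe_neg, coe_one]
  exact pow_char_eq_neg_one_of_add_one_sq_eq_zero p hsq

variable (hA : A ∉ Subgroup.center SL(2, R))
include hA

lemma orderOf_mk'_center_eq_two_of_trace_eq_zero (h : trace (A : Matrix (Fin 2) (Fin 2) R) = 0) :
    orderOf (QuotientGroup.mk' (Subgroup.center SL(2, R)) A) = 2 :=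
  QuotientGroup.orderOf_mk'_eq_prime
    (by rw [sq_eq_neg_one_of_trace_eq_zero h]; exact neg_one_mem_center) hA

lemma orderOf_mk'_center_eq_three_of_trace_eq_neg_one
    (h : trace (A : Matrix (Fin 2) (Fin 2) R) = -1) :
    orderOf (QuotientGroup.mk' (Subgroup.center SL(2, R)) A) = 3 :=
  QuotientGroup.orderOf_mk'_eq_prime
    (by rw [pow_three_eq_one_of_trace_eq_neg_one h]; exact Subgroup.one_mem _) hA

lemma orderOf_mk'_center_eq_char_of_trace_eq_neg_two (p : ℕ) [Fact p.Prime] [CharP R p]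
    (h : trace (A : Matrix (Fin 2) (Fin 2) R) = -2) :
    orderOf (QuotientGroup.mk' (Subgroup.center SL(2, R)) A) = p :=
  QuotientGroup.orderOf_mk'_eq_prime
    (by rw [pow_char_eq_neg_one_of_trace_eq_neg_two p h]; exact neg_one_mem_center) hA

end Matrix.SpecialLinearGroup

open Matrix.SpecialLinearGroup

theorem stmt_18_general (p : ℕ) [Fact p.Prime] (hp4 : p % 4 = 1)
    (i : ZMod p) (hi : i ^ 2 = -1)
    (r₀ r₁ r₂ : Matrix.SpecialLinearGroup (Fin 2) (ZMod p))
    (h0 : (r₀ : Matrix (Fin 2) (Fin 2) (ZMod p)) = !![0, i; i, 0])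
    (h1 : (r₁ : Matrix (Fin 2) (Fin 2) (ZMod p)) = !![i, i; 0, -i])
    (h2 : (r₂ : Matrix (Fin 2) (Fin 2) (ZMod p)) = !![i, 0; 0, -i]) :
    orderOf (QuotientGroup.mk' (Subgroup.center _) r₀) = 2 ∧
    orderOf (QuotientGroup.mk' (Subgroup.center _) r₁) = 2 ∧
    orderOf (QuotientGroup.mk' (Subgroup.center _) r₂) = 2 ∧
    QuotientGroup.mk' (Subgroup.center _) r₀ * QuotientGroup.mk' (Subgroup.center _) r₂ =
      QuotientGroup.mk' (Subgroup.center _) r₂ * QuotientGroup.mk' (Subgroup.center _) r₀ ∧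
    orderOf (QuotientGroup.mk' (Subgroup.center _) r₀ *
      QuotientGroup.mk' (Subgroup.center _) r₁) = 3 ∧
    orderOf (QuotientGroup.mk' (Subgroup.center _) r₁ *
      QuotientGroup.mk' (Subgroup.center _) r₂) = p := by
  have hii : i * i = -1 := by rw [← sq, hi]
  have hi0 : i ≠ 0 := by rintro rfl; simp at hi
  have hi_ne_neg : i ≠ -i := fun h ↦ by
    rcases (ZMod.neg_eq_self_iff i).mp h.symm with h | h
    · exact hi0 h
    · omega
  have hr₀₁ : ((r₀ * r₁ : SL(2, ZMod p)) : Matrix (Fin 2) (Fin 2) (ZMod p)) =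
      !![0, 1; -1, -1] := by
    rw [coe_mul, h0, h1, mul_fin_two]; simp [hii]
  have hr₁₂ : ((r₁ * r₂ : SL(2, ZMod p)) : Matrix (Fin 2) (Fin 2) (ZMod p)) =
      !![-1, 1; 0, -1] := by
    rw [coe_mul, h1, h2, mul_fin_two]; simp [hii]
  have hanti : r₀ * r₂ = -1 * (r₂ * r₀) := Subtype.ext <| by
    rw [coe_mul, neg_one_mul, coe_neg, coe_mul, h0, h2, mul_fin_two, mul_fin_two]; simp [hii]
  refine ⟨?_, ?_, ?_, QuotientGroup.mk'_mul_comm_of_mul_eq neg_one_mem_center hanti, ?_, ?_⟩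
  · exact orderOf_mk'_center_eq_two_of_trace_eq_zero
      (notMem_center_of_apply_ne_zero zero_ne_one (by simpa [h0] using hi0)) (by simp [h0])
  · exact orderOf_mk'_center_eq_two_of_trace_eq_zero
      (notMem_center_of_apply_ne_zero zero_ne_one (by simpa [h1] using hi0)) (by simp [h1])
  · exact orderOf_mk'_center_eq_two_of_trace_eq_zero
      (notMem_center_of_apply_self_ne (i := 0) (j := 1) (by simpa [h2] using hi_ne_neg))
      (by simp [h2])
  · rw [← map_mul]
    exact orderOf_mk'_center_eq_three_of_trace_eq_neg_one
      (notMem_center_of_apply_ne_zero zero_ne_one (by simp [hr₀₁])) (by simp [hr₀₁])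
  · rw [← map_mul]
    exact orderOf_mk'_center_eq_char_of_trace_eq_neg_two
      (notMem_center_of_apply_ne_zero zero_ne_one (by simp [hr₁₂])) p (by norm_num [hr₁₂])

/-- Example 5B: in `PSL₂(F_p)` for a prime `p ≡ 1 (mod 4)`, `p > 5`, with `i² = −1`,
the images of `[[0,i],[i,0]]`, `[[i,i],[0,−i]]`, `[[i,0],[0,−i]]` are involutions,
the first and third commute, their product with the second has order 3, resp. `p`. -/
theorem stmt_18 (p : ℕ) [Fact p.Prime] (hp4 : p % 4 = 1) (hp5 : 5 < p)
    (i : ZMod p) (hi : i ^ 2 = -1)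
    (r₀ r₁ r₂ : Matrix.SpecialLinearGroup (Fin 2) (ZMod p))
    (h0 : (r₀ : Matrix (Fin 2) (Fin 2) (ZMod p)) = !![0, i; i, 0])
    (h1 : (r₁ : Matrix (Fin 2) (Fin 2) (ZMod p)) = !![i, i; 0, -i])
    (h2 : (r₂ : Matrix (Fin 2) (Fin 2) (ZMod p)) = !![i, 0; 0, -i]) :
    orderOf (QuotientGroup.mk' (Subgroup.center _) r₀) = 2 ∧
    orderOf (QuotientGroup.mk' (Subgroup.center _) r₁) = 2 ∧
    orderOf (QuotientGroup.mk' (Subgroup.center _) r₂) = 2 ∧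
    QuotientGroup.mk' (Subgroup.center _) r₀ * QuotientGroup.mk' (Subgroup.center _) r₂ =
      QuotientGroup.mk' (Subgroup.center _) r₂ * QuotientGroup.mk' (Subgroup.center _) r₀ ∧
    orderOf (QuotientGroup.mk' (Subgroup.center _) r₀ *
      QuotientGroup.mk' (Subgroup.center _) r₁) = 3 ∧
    orderOf (QuotientGroup.mk' (Subgroup.center _) r₁ *
      QuotientGroup.mk' (Subgroup.center _) r₂) = p :=
  stmt_18_general p hp4 i hi r₀ r₁ r₂ h0 h1 h2
end
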